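/- arXiv:2211.01610 — 2 statements merged into one kernel-verified Lean document; each statement's English description precedes it below -/
import Mathlib

section
/- Let f : ℝ^d → ℝ be convex with L-Lipschitz gradient, g : ℝ^d → ℝ continuous convex, Φ = f + g, and s > 0. For all x, y ∈ ℝ^d and any subgradient γ ∈ ∂g(P_s(y)) satisfying the proximal optimality condition ∇f(y) + (1/s)(P_s(y) − y) + γ = 0, one has Φ(x) − Φ(P_s(y)) ≥ ⟨∇f(y) + γ, x − P_s(y)⟩ − (L/2)·‖P_s(y) − y‖². -/
/-!
Convexity of `f` bounds `f x` below by its linearization at `y`, the descent lemma for the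
`L`-Lipschitz gradient bounds `f (P y)` above by the same linearization plus
`(L/2)‖P y - y‖²`, and the subgradient inequality at `P y` evaluated at `x` supplies
`⟪γ, x - P y⟫`; adding the three gives the claim.
-/

open scoped RealInnerProductSpace

section Gradient

variable {E : Type*} [NormedAddCommGroup E] [InnerProductSpace ℝ E] [CompleteSpace E]
  {f : E → ℝ}

theorem HasGradientAt.hasDerivAt_add_smul {g w v : E} {t : ℝ}
    (hf : HasGradientAt f g (w + t • v)) :
    HasDerivAt (fun t : ℝ => f (w + t • v)) ⟪g, v⟫ t := by
  have hline : HasDerivAt (fun t : ℝ => w + t • v) v t := by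
    simpa using ((hasDerivAt_id t).smul_const v).const_add w
  have hcomp := hf.hasFDerivAt.comp_hasDerivAt t hline
  simp only [Function.comp_def, InnerProductSpace.toDual_apply_apply] at hcomp
  exact hcomp

theorem ConvexOn.add_inner_gradient_le {s : Set E} {g w z : E} (hf : ConvexOn ℝ s f)
    (hw : w ∈ s) (hz : z ∈ s) (hg : HasGradientAt f g w) :
    f w + ⟪g, z - w⟫ ≤ f z := by
  have hline : (fun t : ℝ => f (w + t • (z - w))) = f ∘ AffineMap.lineMap (k := ℝ) w z := by
    funext t
    simp [AffineMap.lineMap_apply, add_comm]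
  have hderiv : HasDerivAt (f ∘ AffineMap.lineMap (k := ℝ) w z) ⟪g, z - w⟫ 0 :=
    hline ▸ HasGradientAt.hasDerivAt_add_smul (t := 0) (by simpa using hg)
  have hslope := (hf.comp_affineMap _).le_slope_of_hasDerivAt (by simpa using hw)
    (by simpa using hz) one_pos hderiv
  have hdiff : ⟪g, z - w⟫ ≤ f z - f w := by simpa [slope_def_field] using hslope
  linarith

theorem le_add_inner_gradient_add_sq_of_lipschitz {f' : E → E} {L : ℝ}
    (hf' : ∀ x, HasGradientAt f (f' x) x) (hlip : ∀ x y, ‖f' x - f' y‖ ≤ L * ‖x - y‖)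
    (w z : E) :
    f z ≤ f w + ⟪f' w, z - w⟫ + L / 2 * ‖z - w‖ ^ 2 := by
  set v := z - w
  have hderiv (t : ℝ) : HasDerivAt (fun t : ℝ => f (w + t • v)) ⟪f' (w + t • v), v⟫ t :=
    (hf' _).hasDerivAt_add_smul
  have hbound (t : ℝ) (ht : 0 ≤ t) :
      ⟪f' (w + t • v), v⟫ ≤ ⟪f' w, v⟫ + L * ‖v‖ ^ 2 * t := by
    have hlip_t : ‖f' (w + t • v) - f' w‖ ≤ L * (t * ‖v‖) := by
      simpa [norm_smul, abs_of_nonneg ht] using hlip (w + t • v) w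
    calc ⟪f' (w + t • v), v⟫ = ⟪f' w, v⟫ + ⟪f' (w + t • v) - f' w, v⟫ := by
          rw [inner_sub_left]; ring
      _ ≤ ⟪f' w, v⟫ + ‖f' (w + t • v) - f' w‖ * ‖v‖ := by gcongr; exact real_inner_le_norm _ _
      _ ≤ ⟪f' w, v⟫ + L * (t * ‖v‖) * ‖v‖ := by gcongr
      _ = ⟪f' w, v⟫ + L * ‖v‖ ^ 2 * t := by ring
  have hquad (t : ℝ) : HasDerivAt (fun t => f w + t * ⟪f' w, v⟫ + L / 2 * ‖v‖ ^ 2 * t ^ 2)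
      (⟪f' w, v⟫ + L * ‖v‖ ^ 2 * t) t := by
    refine ((((hasDerivAt_id' t).mul_const ⟪f' w, v⟫).const_add (f w)).add
      ((hasDerivAt_pow 2 t).const_mul (L / 2 * ‖v‖ ^ 2))).congr_deriv ?_
    push_cast
    ring
  have hmodel := image_le_of_deriv_right_le_deriv_boundary (a := 0) (b := 1)
    (fun t _ => (hderiv t).continuousAt.continuousWithinAt)
    (fun t _ => (hderiv t).hasDerivWithinAt) (by simp)
    (fun t _ => (hquad t).continuousAt.continuousWithinAt)
    (fun t _ => (hquad t).hasDerivWithinAt) (fun t ht => hbound t ht.1)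
    (Set.right_mem_Icc.mpr zero_le_one)
  simpa [v] using hmodel

end Gradient

theorem composite_lower_bound_at_prox_general {d : ℕ}
    (f g : EuclideanSpace ℝ (Fin d) → ℝ)
    (f' : EuclideanSpace ℝ (Fin d) → EuclideanSpace ℝ (Fin d))
    (L s : ℝ)
    (hfconv : ConvexOn ℝ Set.univ f)
    (hf' : ∀ x, HasGradientAt f (f' x) x)
    (hlip : ∀ x y, ‖f' x - f' y‖ ≤ L * ‖x - y‖)
    (Φ : EuclideanSpace ℝ (Fin d) → ℝ) (hΦ : ∀ x, Φ x = f x + g x)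
    (P : EuclideanSpace ℝ (Fin d) → EuclideanSpace ℝ (Fin d)) :
    ∀ (x y γ : EuclideanSpace ℝ (Fin d)),
      (∀ z : EuclideanSpace ℝ (Fin d), g z ≥ g (P y) + ⟪γ, z - P y⟫) →
      f' y + s⁻¹ • (P y - y) + γ = 0 →
      Φ x - Φ (P y) ≥ ⟪f' y + γ, x - P y⟫ - L / 2 * ‖P y - y‖ ^ 2 := by
  intro x y γ hsubgrad _
  have hfx : f y + ⟪f' y, x - y⟫ ≤ f x :=
    hfconv.add_inner_gradient_le (Set.mem_univ y) (Set.mem_univ x) (hf' y)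
  have hfPy : f (P y) ≤ f y + ⟪f' y, P y - y⟫ + L / 2 * ‖P y - y‖ ^ 2 :=
    le_add_inner_gradient_add_sq_of_lipschitz hf' hlip y (P y)
  have hgx := hsubgrad x
  have hsplit : ⟪f' y + γ, x - P y⟫ = ⟪f' y, x - y⟫ - ⟪f' y, P y - y⟫ + ⟪γ, x - P y⟫ := by
    rw [inner_add_left, ← inner_sub_right, sub_sub_sub_cancel_right]
  rw [hΦ, hΦ, hsplit]
  linarith

/-- For `Φ = f + g`, any `γ ∈ ∂g(P_s(y))` satisfying the proximal optimality condition
`∇f(y) + (1/s)(P_s(y) − y) + γ = 0` gives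
`Φ(x) − Φ(P_s(y)) ≥ ⟨∇f(y) + γ, x − P_s(y)⟩ − (L/2)‖P_s(y) − y‖²`. -/
theorem composite_lower_bound_at_prox {d : ℕ}
    (f g : EuclideanSpace ℝ (Fin d) → ℝ)
    (f' : EuclideanSpace ℝ (Fin d) → EuclideanSpace ℝ (Fin d))
    (L s : ℝ) (hL : 0 < L) (hs : 0 < s)
    (hfconv : ConvexOn ℝ Set.univ f)
    (hf' : ∀ x, HasGradientAt f (f' x) x)
    (hlip : ∀ x y, ‖f' x - f' y‖ ≤ L * ‖x - y‖)
    (hgconv : ConvexOn ℝ Set.univ g) (hgcont : Continuous g)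
    (Φ : EuclideanSpace ℝ (Fin d) → ℝ) (hΦ : ∀ x, Φ x = f x + g x)
    (P : EuclideanSpace ℝ (Fin d) → EuclideanSpace ℝ (Fin d))
    (hP : ∀ x, IsMinOn (fun z => 1 / (2 * s) * ‖z - (x - s • f' x)‖ ^ 2 + g z) Set.univ (P x)) :
    ∀ (x y γ : EuclideanSpace ℝ (Fin d)),
      (∀ z : EuclideanSpace ℝ (Fin d), g z ≥ g (P y) + ⟪γ, z - P y⟫) →
      f' y + s⁻¹ • (P y - y) + γ = 0 →
      Φ x - Φ (P y) ≥ ⟪f' y + γ, x - P y⟫ - L / 2 * ‖P y - y‖ ^ 2 :=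
  composite_lower_bound_at_prox_general f g f' L s hfconv hf' hlip Φ hΦ P
end

section
/- Let Φ = f + g with f : ℝ^d → ℝ convex with L-Lipschitz gradient and g : ℝ^d → ℝ continuous convex, let x⋆ be a minimizer of Φ, and let 0 < s ≤ 1/L. For the ISTA iterates x_k = x_{k−1} − s·G_s(x_{k−1}) starting from any x₀ ∈ ℝ^d, one has for every k ≥ 1: Φ(x_k) − Φ(x⋆) ≤ ‖x₀ − x⋆‖² / (2sk). -/
/-!
Every ISTA step satisfies, for every point z, the three-point inequality
`Φ(P y) - Φ(z) ≤ (‖y - z‖² - ‖P y - z‖²) / (2s)`: add the descent lemma for `f` (where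
`s ≤ 1/L` absorbs the quadratic term), the gradient inequality for convex `f`, and the variational
inequality characterising the proximal point of convex `g`. Taking `z = x_k` shows that the
objective values decrease; taking `z = x⋆` makes the right-hand sides telescope, so that
`k (Φ(x_k) - Φ(x⋆)) ≤ ‖x₀ - x⋆‖² / (2s)`.
-/

open scoped RealInnerProductSpace
open Set Filter Topology

theorem le_add_deriv_add_half_of_deriv_sub_le {φ φ' : ℝ → ℝ} {C : ℝ}
    (hφ : ∀ t, HasDerivAt φ (φ' t) t) (hC : ∀ t ∈ Ioo (0 : ℝ) 1, φ' t - φ' 0 ≤ C * t) :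
    φ 1 ≤ φ 0 + φ' 0 + C / 2 := by
  set h : ℝ → ℝ := fun t => φ t - t * φ' 0 - C / 2 * t ^ 2
  have hh : ∀ t, HasDerivAt h (φ' t - φ' 0 - C * t) t := by
    intro t
    have hlin : HasDerivAt (fun t => t * φ' 0) (φ' 0) t := by
      simpa using (hasDerivAt_id t).mul_const (φ' 0)
    have hquad : HasDerivAt (fun t => C / 2 * t ^ 2) (C * t) t :=
      ((hasDerivAt_pow 2 t).const_mul (C / 2)).congr_deriv (by push_cast; ring)
    exact ((hφ t).sub hlin).sub hquad
  have hanti : AntitoneOn h (Icc 0 1) :=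
    antitoneOn_of_hasDerivWithinAt_nonpos (convex_Icc 0 1)
      (fun t _ => (hh t).continuousAt.continuousWithinAt)
      (fun t _ => (hh t).hasDerivWithinAt)
      (fun t ht => by rw [interior_Icc] at ht; linarith [hC t ht])
  have := hanti (left_mem_Icc.2 zero_le_one) (right_mem_Icc.2 zero_le_one) zero_le_one
  simp only [h] at this
  linarith

theorem le_of_forall_mem_Ioo_le_add_mul {a b c : ℝ} (h : ∀ t ∈ Ioo (0 : ℝ) 1, a ≤ b + t * c) :
    a ≤ b := by
  have hlim : Tendsto (fun t : ℝ => b + t * c) (𝓝[>] 0) (𝓝 b) :=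
    ((continuous_const.add (continuous_id.mul continuous_const)).tendsto' 0 b
      (by simp)).mono_left nhdsWithin_le_nhds
  exact ge_of_tendsto hlim (eventually_of_mem (Ioo_mem_nhdsGT one_pos) h)

theorem le_div_of_antitone_of_le_sub {e D : ℕ → ℝ} (he : ∀ k, e (k + 1) ≤ e k)
    (hD : ∀ k, e (k + 1) ≤ D k - D (k + 1)) (hD0 : ∀ k, 0 ≤ D k) {k : ℕ} (hk : 1 ≤ k) :
    e k ≤ D 0 / k := by
  have hsum : ∀ n : ℕ, n * e n ≤ D 0 - D n := by
    intro n
    induction n with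
    | zero => simp
    | succ n ih =>
      have := mul_le_mul_of_nonneg_left (he n) (Nat.cast_nonneg n)
      push_cast
      linarith [hD n]
  rw [le_div_iff₀ (by positivity), mul_comm]
  linarith [hsum k, hD0 k]

section InnerProductSpace

variable {E : Type*} [NormedAddCommGroup E] [InnerProductSpace ℝ E]

theorem ConvexOn.le_add_inner_of_isMinOn_prox {g : E → ℝ} (hg : ConvexOn ℝ univ g) {s : ℝ}
    {u q : E} (hq : IsMinOn (fun z => 1 / (2 * s) * ‖z - u‖ ^ 2 + g z) univ q) (z : E) :
    g q ≤ g z + s⁻¹ * ⟪q - u, z - q⟫ := by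
  -- compare `q` with `q + t • (z - q)` and let `t → 0⁺`
  refine le_of_forall_mem_Ioo_le_add_mul (c := ‖z - q‖ ^ 2 / (2 * s)) fun t ht => ?_
  have hmin := hq (mem_univ (q + t • (z - q)))
  have hconv : g (q + t • (z - q)) ≤ (1 - t) * g q + t * g z := by
    have := hg.2 (mem_univ q) (mem_univ z) (sub_nonneg.2 ht.2.le) ht.1.le (sub_add_cancel 1 t)
    rwa [show (1 - t) • q + t • z = q + t • (z - q) by module] at this
  have hexpand : ‖q + t • (z - q) - u‖ ^ 2
      = ‖q - u‖ ^ 2 + 2 * t * ⟪q - u, z - q⟫ + t ^ 2 * ‖z - q‖ ^ 2 := by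
    rw [show q + t • (z - q) - u = (q - u) + t • (z - q) by abel, norm_add_sq_real,
      real_inner_smul_right, norm_smul, mul_pow, Real.norm_eq_abs, sq_abs]
    ring
  simp only [mem_ofPred_eq, hexpand] at hmin
  have : t * g q ≤ t * (g z + s⁻¹ * ⟪q - u, z - q⟫ + t * (‖z - q‖ ^ 2 / (2 * s))) := by
    have hscale : 1 / (2 * s) * (2 * t * ⟪q - u, z - q⟫ + t ^ 2 * ‖z - q‖ ^ 2)
        = t * (s⁻¹ * ⟪q - u, z - q⟫ + t * (‖z - q‖ ^ 2 / (2 * s))) := by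
      field_simp
    nlinarith
  exact le_of_mul_le_mul_left this ht.1

variable [CompleteSpace E]

theorem HasGradientAt.hasDerivAt_comp_add_smul {f : E → ℝ} {f' x v : E} {t : ℝ}
    (hf : HasGradientAt f f' (x + t • v)) :
    HasDerivAt (fun t : ℝ => f (x + t • v)) ⟪f', v⟫ t := by
  have hline : HasDerivAt (fun t : ℝ => x + t • v) v t := by
    simpa using ((hasDerivAt_id t).smul_const v).const_add x
  exact hf.hasFDerivAt.comp_hasDerivAt t hline

theorem ConvexOn.add_inner_le_of_hasGradientAt {s : Set E} {f : E → ℝ} {f' x z : E}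
    (hfc : ConvexOn ℝ s f) (hx : x ∈ s) (hz : z ∈ s) (hf : HasGradientAt f f' x) :
    f x + ⟪f', z - x⟫ ≤ f z := by
  set ℓ : ℝ →ᵃ[ℝ] E := AffineMap.lineMap x z
  have hline : ConvexOn ℝ (ℓ ⁻¹' s) (f ∘ ℓ) := hfc.comp_affineMap ℓ
  have hderiv : HasDerivAt (f ∘ ℓ) ⟪f', z - x⟫ 0 := by
    have : f ∘ ℓ = fun t : ℝ => f (x + t • (z - x)) := by
      ext t; simp [ℓ, AffineMap.lineMap_apply_module', add_comm]
    rw [this]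
    exact HasGradientAt.hasDerivAt_comp_add_smul (by simpa using hf)
  have := hline.le_slope_of_hasDerivAt (x := 0) (y := 1) (by simpa [ℓ] using hx)
    (by simpa [ℓ] using hz) zero_lt_one hderiv
  simp only [slope_def_field, Function.comp_apply, AffineMap.lineMap_apply_one,
    AffineMap.lineMap_apply_zero, sub_zero, div_one, ℓ] at this
  linarith

theorem le_add_inner_add_of_lipschitz_gradient {f : E → ℝ} {f' : E → E} {L : ℝ}
    (hf : ∀ x, HasGradientAt f (f' x) x) (hlip : ∀ x y, ‖f' x - f' y‖ ≤ L * ‖x - y‖)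
    (x v : E) : f (x + v) ≤ f x + ⟪f' x, v⟫ + L / 2 * ‖v‖ ^ 2 := by
  have key := le_add_deriv_add_half_of_deriv_sub_le (φ := fun t : ℝ => f (x + t • v))
    (fun t => (hf _).hasDerivAt_comp_add_smul) (C := L * ‖v‖ ^ 2) fun t ht => by
      calc ⟪f' (x + t • v), v⟫ - ⟪f' (x + (0:ℝ) • v), v⟫
          = ⟪f' (x + t • v) - f' x, v⟫ := by rw [inner_sub_left, zero_smul, add_zero]
        _ ≤ ‖f' (x + t • v) - f' x‖ * ‖v‖ := real_inner_le_norm _ _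
        _ ≤ L * ‖t • v‖ * ‖v‖ := by
            gcongr
            simpa using hlip (x + t • v) x
        _ = L * ‖v‖ ^ 2 * t := by rw [norm_smul, Real.norm_of_nonneg ht.1.le]; ring
  simpa [mul_div_right_comm] using key

theorem proxGrad_objective_sub_le {f g : E → ℝ} {f' : E → E} {L s : ℝ} (hs : 0 < s)
    (hLs : L * s ≤ 1) (hfc : ConvexOn ℝ univ f) (hf : ∀ x, HasGradientAt f (f' x) x)
    (hlip : ∀ x y, ‖f' x - f' y‖ ≤ L * ‖x - y‖) (hgc : ConvexOn ℝ univ g) {y q : E}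
    (hq : IsMinOn (fun z => 1 / (2 * s) * ‖z - (y - s • f' y)‖ ^ 2 + g z) univ q) (z : E) :
    f q + g q - (f z + g z) ≤ (‖y - z‖ ^ 2 - ‖q - z‖ ^ 2) / (2 * s) := by
  have hdesc := le_add_inner_add_of_lipschitz_gradient hf hlip y (q - y)
  rw [add_sub_cancel] at hdesc
  have hconv := hfc.add_inner_le_of_hasGradientAt (mem_univ y) (mem_univ z) (hf y)
  have hprox := hgc.le_add_inner_of_isMinOn_prox hq z
  have hsplit : ⟪q - (y - s • f' y), z - q⟫ = ⟪q - y, z - q⟫ + s * ⟪f' y, z - q⟫ := by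
    rw [show q - (y - s • f' y) = (q - y) + s • f' y by abel, inner_add_left,
      real_inner_smul_left]
  have hpolar : 2 * ⟪q - y, z - q⟫ = ‖y - z‖ ^ 2 - ‖q - z‖ ^ 2 - ‖q - y‖ ^ 2 := by
    have hnorm := norm_sub_sq_real (q - z) (y - z)
    rw [sub_sub_sub_cancel_right] at hnorm
    conv_lhs => rw [show q - y = (q - z) - (y - z) by abel, show z - q = -(q - z) by abel]
    rw [inner_neg_right, inner_sub_left, real_inner_self_eq_norm_sq, real_inner_comm]
    linarith
  have hinner : ⟪f' y, q - y⟫ + ⟪f' y, z - q⟫ = ⟪f' y, z - y⟫ := by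
    rw [← inner_add_right, sub_add_sub_cancel']
  have hquad : L / 2 * ‖q - y‖ ^ 2 ≤ ‖q - y‖ ^ 2 / (2 * s) := by
    rw [le_div_iff₀ (by positivity)]
    nlinarith [sq_nonneg ‖q - y‖]
  rw [hsplit, mul_add, inv_mul_cancel_left₀ hs.ne'] at hprox
  have hpolar' : s⁻¹ * ⟪q - y, z - q⟫
      = ‖y - z‖ ^ 2 / (2 * s) - ‖q - z‖ ^ 2 / (2 * s) - ‖q - y‖ ^ 2 / (2 * s) := by
    rw [← sub_div, ← sub_div, ← hpolar]; field_simp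
  rw [sub_div]
  linarith

end InnerProductSpace

theorem ista_objective_rate_general {d : ℕ}
    (f g : EuclideanSpace ℝ (Fin d) → ℝ)
    (f' : EuclideanSpace ℝ (Fin d) → EuclideanSpace ℝ (Fin d))
    (L s : ℝ) (hL : 0 < L) (hs : 0 < s)
    (hfconv : ConvexOn ℝ Set.univ f)
    (hf' : ∀ x, HasGradientAt f (f' x) x)
    (hlip : ∀ x y, ‖f' x - f' y‖ ≤ L * ‖x - y‖)
    (hgconv : ConvexOn ℝ Set.univ g)
    (Φ : EuclideanSpace ℝ (Fin d) → ℝ) (hΦ : ∀ x, Φ x = f x + g x)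
    (P : EuclideanSpace ℝ (Fin d) → EuclideanSpace ℝ (Fin d))
    (hP : ∀ x, IsMinOn (fun z => 1 / (2 * s) * ‖z - (x - s • f' x)‖ ^ 2 + g z) Set.univ (P x))
    (G : EuclideanSpace ℝ (Fin d) → EuclideanSpace ℝ (Fin d))
    (hG : ∀ x, G x = s⁻¹ • (x - P x))
    (xstar : EuclideanSpace ℝ (Fin d))
    (x : ℕ → EuclideanSpace ℝ (Fin d))
    (hx : ∀ k : ℕ, x (k + 1) = x k - s • G (x k))
    (hsL : s ≤ 1 / L) :
    ∀ k : ℕ, 1 ≤ k →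
      Φ (x k) - Φ xstar ≤ ‖x 0 - xstar‖ ^ 2 / (2 * s * (k : ℝ)) := by
  have hLs : L * s ≤ 1 := by rwa [le_div_iff₀ hL, mul_comm] at hsL
  have hstep : ∀ k z, Φ (x (k + 1)) - Φ z ≤ (‖x k - z‖ ^ 2 - ‖x (k + 1) - z‖ ^ 2) / (2 * s) := by
    intro k z
    rw [hx, hG, smul_inv_smul₀ hs.ne', sub_sub_cancel, hΦ, hΦ]
    exact proxGrad_objective_sub_le hs hLs hfconv hf' hlip hgconv (hP (x k)) z
  have hdescent : ∀ k, Φ (x (k + 1)) - Φ xstar ≤ Φ (x k) - Φ xstar := by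
    intro k
    have := hstep k (x k)
    rw [sub_self, norm_zero, zero_pow two_ne_zero, zero_sub, neg_div] at this
    linarith [show 0 ≤ ‖x (k + 1) - x k‖ ^ 2 / (2 * s) by positivity]
  intro k hk
  rw [← div_div]
  refine le_div_of_antitone_of_le_sub (e := fun k => Φ (x k) - Φ xstar)
    (D := fun k => ‖x k - xstar‖ ^ 2 / (2 * s))
    hdescent (fun k => by rw [← sub_div]; exact hstep k xstar) (fun k => by positivity) hk

/-- **ISTA objective-value convergence rate.** For any step size `0 < s ≤ 1/L`,
`Φ(x_k) − Φ(x⋆) ≤ ‖x₀ − x⋆‖²/(2sk)` for every `k ≥ 1`. -/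
theorem ista_objective_rate {d : ℕ}
    (f g : EuclideanSpace ℝ (Fin d) → ℝ)
    (f' : EuclideanSpace ℝ (Fin d) → EuclideanSpace ℝ (Fin d))
    (L s : ℝ) (hL : 0 < L) (hs : 0 < s)
    (hfconv : ConvexOn ℝ Set.univ f)
    (hf' : ∀ x, HasGradientAt f (f' x) x)
    (hlip : ∀ x y, ‖f' x - f' y‖ ≤ L * ‖x - y‖)
    (hgconv : ConvexOn ℝ Set.univ g) (hgcont : Continuous g)
    (Φ : EuclideanSpace ℝ (Fin d) → ℝ) (hΦ : ∀ x, Φ x = f x + g x)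
    (P : EuclideanSpace ℝ (Fin d) → EuclideanSpace ℝ (Fin d))
    (hP : ∀ x, IsMinOn (fun z => 1 / (2 * s) * ‖z - (x - s • f' x)‖ ^ 2 + g z) Set.univ (P x))
    (G : EuclideanSpace ℝ (Fin d) → EuclideanSpace ℝ (Fin d))
    (hG : ∀ x, G x = s⁻¹ • (x - P x))
    (xstar : EuclideanSpace ℝ (Fin d)) (hstar : IsMinOn Φ Set.univ xstar)
    (x : ℕ → EuclideanSpace ℝ (Fin d))
    (hx : ∀ k : ℕ, x (k + 1) = x k - s • G (x k))
    (hsL : s ≤ 1 / L) :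
    ∀ k : ℕ, 1 ≤ k →
      Φ (x k) - Φ xstar ≤ ‖x 0 - xstar‖ ^ 2 / (2 * s * (k : ℝ)) :=
  ista_objective_rate_general f g f' L s hL hs hfconv hf' hlip hgconv Φ hΦ P hP G hG xstar x hx hsL
end
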